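/- arXiv:1004.2608 — 4 statements merged into one kernel-verified Lean document; each statement's English description precedes it below -/
import Mathlib

section
/- Let l be a prime with l ≡ 1 (mod 8) such that 2l = r² + s² for integers r, s with s ≡ ±3 (mod 8). Then the equation x² − 2l·y² = −1 has no integer solutions. -/
/-!
Multiplying `x - i` by `r + i s` in the Gaussian integers and halving turns a solution of
`x² + 1 = 2 l y²` into a Pythagorean triple `(u, v, l y)` with `s u - r v = l`. Writing
`u, v = k (m² - n²), k · 2mn` (in some order), the cofactor `s (m² - n²) - r · 2mn` (or its twin)
divides the prime `l ≡ 1 (mod 8)`, hence is `≡ ±1 (mod 8)`. But `r² = 2l - s² ≡ 9 (mod 16)`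
forces `r ≡ ±3 (mod 8)` as well, and for `r, s ≡ ±3 (mod 8)` that cofactor is never `±1 (mod 8)`.
-/

theorem Int.sq_emod_sixteen_eq_nine_iff (r : ℤ) : r ^ 2 % 16 = 9 ↔ r % 8 = 3 ∨ r % 8 = 5 := by
  rw [Int.emod_emod_of_dvd r (by norm_num : (8 : ℤ) ∣ 16) |>.symm, pow_two, Int.mul_emod]
  have h0 := Int.emod_nonneg r (by norm_num : (16 : ℤ) ≠ 0)
  have h16 := Int.emod_lt_of_pos r (by norm_num : (0 : ℤ) < 16)
  interval_cases r % 16 <;> decide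

theorem ZMod.intCast_eq_three_or_five {r : ℤ} (hr : r % 8 = 3 ∨ r % 8 = 5) :
    (r : ZMod 8) = 3 ∨ (r : ZMod 8) = 5 := by
  rw [← ZMod.intCast_mod r 8]
  rcases hr with h | h <;> simp [h]

theorem ZMod.intCast_eq_one_or_eq_neg_one_of_dvd_prime {n l : ℕ} (hl : l.Prime) (hln : l % n = 1)
    {e : ℤ} (he : e ∣ l) : (e : ZMod n) = 1 ∨ (e : ZMod n) = -1 := by
  have habs : (e.natAbs : ZMod n) = 1 := by
    rcases hl.eq_one_or_self_of_dvd _ (Int.natAbs_dvd_natAbs.mpr he) with h | h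
    · rw [h, Nat.cast_one]
    · rw [h, ← ZMod.natCast_mod, hln, Nat.cast_one]
  rcases Int.natAbs_eq e with h | h <;> rw [h]
  · left
    rw [Int.cast_natCast, habs]
  · right
    rw [Int.cast_neg, Int.cast_natCast, habs]

theorem ZMod.not_mul_sq_sub_sq_sub_mul_two_mul_eq_one_or_neg_one {c d : ZMod 8}
    (hc : c = 3 ∨ c = 5) (hd : d = 3 ∨ d = 5) (m n : ZMod 8) :
    ¬(c * (m ^ 2 - n ^ 2) - d * (2 * m * n) = 1 ∨
      c * (m ^ 2 - n ^ 2) - d * (2 * m * n) = -1) := by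
  revert m n
  rcases hc with rfl | rfl <;> rcases hd with rfl | rfl <;> decide

theorem Int.mul_sq_sub_sq_sub_mul_two_mul_not_dvd_prime {c d : ℤ} (hc : c % 8 = 3 ∨ c % 8 = 5)
    (hd : d % 8 = 3 ∨ d % 8 = 5) (m n : ℤ) {l : ℕ} (hl : l.Prime) (hl8 : l % 8 = 1) :
    ¬c * (m ^ 2 - n ^ 2) - d * (2 * m * n) ∣ (l : ℤ) := by
  intro hdvd
  have h8 := ZMod.intCast_eq_one_or_eq_neg_one_of_dvd_prime hl hl8 hdvd
  push_cast at h8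
  exact ZMod.not_mul_sq_sub_sq_sub_mul_two_mul_eq_one_or_neg_one
    (ZMod.intCast_eq_three_or_five hc) (ZMod.intCast_eq_three_or_five hd) m n h8

theorem exists_pythagoreanTriple_mul_sub_mul_eq {a x y r s : ℤ}
    (hx : x ^ 2 + 1 = 2 * a * y ^ 2) (hrs : r ^ 2 + s ^ 2 = 2 * a) (hs : Odd s) :
    ∃ u v : ℤ, PythagoreanTriple u v (a * y) ∧ s * u - r * v = a := by
  have hx_odd : Odd x := Int.odd_pow' two_ne_zero |>.mp ⟨a * y ^ 2 - 1, by linarith⟩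
  have hr_odd : Odd r := Int.odd_pow' two_ne_zero |>.mp <| by
    rw [show r ^ 2 = 2 * a - s ^ 2 by linarith]
    exact (even_two_mul a).sub_odd hs.pow
  obtain ⟨u, hu⟩ := (hx_odd.mul hr_odd).add_odd hs
  obtain ⟨v, hv⟩ := (hx_odd.mul hs).sub_odd hr_odd
  refine ⟨u, v, ?_, ?_⟩
  · refine mul_left_cancel₀ (four_ne_zero (α := ℤ)) ?_
    linear_combination -(x * r + s + 2 * u) * hu - (x * s - r + 2 * v) * hv
      + (r ^ 2 + s ^ 2) * hx + 2 * a * y ^ 2 * hrs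
  · linarith [show 2 * (s * u - r * v) = 2 * a by linear_combination -s * hu + r * hv + hrs]

theorem PythagoreanTriple.mul_sub_mul_ne_prime {u v w r s : ℤ} (h : PythagoreanTriple u v w)
    (hr : r % 8 = 3 ∨ r % 8 = 5) (hs : s % 8 = 3 ∨ s % 8 = 5) {l : ℕ} (hl : l.Prime)
    (hl8 : l % 8 = 1) : s * u - r * v ≠ l := by
  intro he
  obtain ⟨k, m, n, huv, -⟩ := PythagoreanTriple.classification.mp h
  rcases huv with ⟨rfl, rfl⟩ | ⟨rfl, rfl⟩
  · exact Int.mul_sq_sub_sq_sub_mul_two_mul_not_dvd_prime hs hr m n hl hl8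
      ⟨k, by rw [← he]; ring⟩
  · exact Int.mul_sq_sub_sq_sub_mul_two_mul_not_dvd_prime hr hs m n hl hl8
      ⟨-k, by rw [← he]; ring⟩

/-- **Epstein–Rédei theorem.** If `l` is a prime with `l ≡ 1 (mod 8)` such that
`2l = r² + s²` for integers `r, s` with `s ≡ ±3 (mod 8)`, then the equation
`x² − 2l·y² = −1` has no integer solutions. -/
theorem epstein_redei (l : ℕ) (hl : l.Prime) (hl8 : l % 8 = 1)
    (r s : ℤ) (hrs : (2 * l : ℤ) = r ^ 2 + s ^ 2)
    (hs : s % 8 = 3 ∨ s % 8 = 5) :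
    ¬ ∃ x y : ℤ, x ^ 2 - 2 * l * y ^ 2 = -1 := by
  rintro ⟨x, y, hxy⟩
  have hr : r % 8 = 3 ∨ r % 8 = 5 := by
    rw [← Int.sq_emod_sixteen_eq_nine_iff] at hs ⊢
    omega
  obtain ⟨u, v, huvw, hsuv⟩ := exists_pythagoreanTriple_mul_sub_mul_eq (x := x) (by linarith)
    hrs.symm (Int.odd_iff.mpr (by omega))
  exact huvw.mul_sub_mul_ne_prime hr hs hl hl8 hsuv
end

section
/- There are no integers x, y with x² − 34·y² = −1. -/
/-- Descent: composing a solution of `x² - 34y² = -1` with the inverse of the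
fundamental Pell unit `35 + 6√34` strictly decreases `y`. -/
theorem no_sol_aux : ∀ n : ℕ, ∀ x y : ℤ, 0 ≤ y → y ≤ n → x ^ 2 - 34 * y ^ 2 = -1 → False := by
  intro n
  induction n with
  | zero =>
    intro x y hy hyn h
    have hy0 : y = 0 := le_antisymm (by exact_mod_cast hyn) hy
    subst hy0
    nlinarith [sq_nonneg x]
  | succ n ih =>
    intro x y hy hyn h
    rcases le_or_gt y n with hle | hgt
    · exact ih x y hy hle h
    · have hy1 : (1 : ℤ) ≤ y := by omega
      set x0 : ℤ := |x| with hx0def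
      have hx0 : x0 ^ 2 = x ^ 2 := sq_abs x
      have hx0nn : 0 ≤ x0 := abs_nonneg x
      have h' : (35 * x0 - 204 * y) ^ 2 - 34 * (35 * y - 6 * x0) ^ 2 = -1 := by
        linear_combination h + hx0
      have hxsq : x0 ^ 2 = 34 * y ^ 2 - 1 := by linear_combination h + hx0
      have hpos : 0 < 35 * y - 6 * x0 := by nlinarith
      have hlt : 35 * y - 6 * x0 < y := by nlinarith
      have hle' : 35 * y - 6 * x0 ≤ n := by omega
      exact ih (35 * x0 - 204 * y) (35 * y - 6 * x0) (by omega) hle' h'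

/-- There are no integers `x, y` with `x² − 34·y² = −1`. -/
theorem no_integer_solution_neg_pell_34 :
    ¬ ∃ x y : ℤ, x ^ 2 - 34 * y ^ 2 = -1 := by
  rintro ⟨x, y, h⟩
  have h' : x ^ 2 - 34 * |y| ^ 2 = -1 := by
    rw [sq_abs]; exact h
  exact no_sol_aux |y|.natAbs x |y| (abs_nonneg y) (by simp [Int.natAbs_abs]) h'
end

section
/- Let d be a positive integer and l an odd prime with l ∤ d and l ∤ 2. If x² + d·y² = l is solvable in ℤ_p for all primes p, then l splits completely in ℚ(√−d), i.e., −d is a quadratic residue mod l; moreover for each odd prime q dividing d, l is a quadratic residue mod q; and if d is odd then l ≡ 1 or d (mod 4); if d ≡ 2 (mod 4) then l ≡ 1 or d+1 (mod 8); if d ≡ 4 (mod 8) then l ≡ 1 (mod 4); if 8 | d then l ≡ 1 (mod 8). -/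
/-!
Reducing a solution in `ℤ_l` modulo `l` gives `x² + d y² ≡ 0` with `y ≢ 0`, since
otherwise `l² ∣ x² + d y² = l`; hence `-d ≡ (x / y)²`. Reducing a solution in `ℤ_q`
modulo a prime `q ∣ d` gives `l ≡ x²`. Reducing a solution in `ℤ_2` modulo `8`, where
every square is `0`, `1` or `4`, leaves `l ≡ s + d t` with `s, t ∈ {0, 1, 4}`, and the
oddness of `l` rules out all the cases not allowed by the congruence conditions.
-/

theorem exists_sq_add_mul_sq_eq_map {R S : Type*} [CommRing R] [CommRing S] (f : R →+* S)
    {d l : ℕ} (h : ∃ x y : R, x ^ 2 + d * y ^ 2 = l) : ∃ a b : S, a ^ 2 + d * b ^ 2 = l := by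
  obtain ⟨x, y, hxy⟩ := h
  exact ⟨f x, f y, by simpa using congrArg f hxy⟩

theorem isSquare_neg_of_sq_add_mul_sq_eq_zero {K : Type*} [Field K] {a b c : K} (hb : b ≠ 0)
    (h : a ^ 2 + c * b ^ 2 = 0) : IsSquare (-c) :=
  ⟨a / b, by field_simp; linear_combination -h⟩

theorem isUnit_of_dvd_of_dvd_of_sq_add_mul_sq_eq {R : Type*} [CommRing R] [IsDomain R]
    {p x y c : R} (hp : p ≠ 0) (hx : p ∣ x) (hy : p ∣ y) (h : x ^ 2 + c * y ^ 2 = p) :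
    IsUnit p := by
  obtain ⟨a, rfl⟩ := hx
  obtain ⟨b, rfl⟩ := hy
  refine IsUnit.of_mul_eq_one (a ^ 2 + c * b ^ 2) (mul_left_cancel₀ hp ?_)
  linear_combination h

namespace PadicInt

variable {p : ℕ} [Fact p.Prime]

theorem dvd_of_toZMod_eq_zero {x : ℤ_[p]} (hx : toZMod x = 0) : (p : ℤ_[p]) ∣ x := by
  rwa [← Ideal.mem_span_singleton, ← maximalIdeal_eq_span_p, ← ker_toZMod]

theorem toZMod_ne_zero_of_sq_add_mul_sq_eq {x y c : ℤ_[p]} (h : x ^ 2 + c * y ^ 2 = p) :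
    toZMod y ≠ 0 := by
  intro hy
  have hx : toZMod x = 0 := by simpa [hy] using congrArg toZMod h
  have hp : (p : ℤ_[p]) ≠ 0 := Nat.cast_ne_zero.mpr (Fact.out : p.Prime).ne_zero
  exact p_nonunit <| isUnit_of_dvd_of_dvd_of_sq_add_mul_sq_eq hp
    (dvd_of_toZMod_eq_zero hx) (dvd_of_toZMod_eq_zero hy) h

end PadicInt

theorem ZMod.val_sq_eq_zero_or_one_or_four (a : ZMod 8) :
    (a ^ 2).val = 0 ∨ (a ^ 2).val = 1 ∨ (a ^ 2).val = 4 := by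
  decide +revert

theorem mod_eight_conditions_of_sq_add_mul_sq_eq {d l : ℕ} (hl : l % 2 = 1) {a b : ZMod 8}
    (h : a ^ 2 + d * b ^ 2 = l) :
    (d % 2 = 1 → l % 4 = 1 ∨ l % 4 = d % 4) ∧
    (d % 4 = 2 → l % 8 = 1 ∨ l % 8 = (d + 1) % 8) ∧
    (d % 8 = 4 → l % 4 = 1) ∧
    (8 ∣ d → l % 8 = 1) := by
  have hmod : l % 8 = ((a ^ 2).val + d * (b ^ 2).val) % 8 :=
    (ZMod.natCast_eq_natCast_iff' _ _ 8).mp (by push_cast [ZMod.natCast_zmod_val]; exact h.symm)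
  rcases a.val_sq_eq_zero_or_one_or_four with ha | ha | ha <;>
    rcases b.val_sq_eq_zero_or_one_or_four with hb | hb | hb <;>
    rw [ha, hb] at hmod <;> omega

theorem local_solvability_conditions_x_sq_add_d_y_sq_general
    (d l : ℕ) (hl : l.Prime) (hlodd : l ≠ 2)
    (hloc : ∀ (p : ℕ) (_ : Fact p.Prime), ∃ x y : ℤ_[p], x ^ 2 + d * y ^ 2 = l) :
    IsSquare (-(d : ZMod l)) ∧
    (∀ q : ℕ, q.Prime → q ≠ 2 → q ∣ d → IsSquare ((l : ZMod q))) ∧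
    (Odd d → l % 4 = 1 ∨ l % 4 = d % 4) ∧
    (d % 4 = 2 → l % 8 = 1 ∨ l % 8 = (d + 1) % 8) ∧
    (d % 8 = 4 → l % 4 = 1) ∧
    (8 ∣ d → l % 8 = 1) := by
  have square_mod_l : IsSquare (-(d : ZMod l)) := by
    have : Fact l.Prime := ⟨hl⟩
    obtain ⟨x, y, hxy⟩ := hloc l ⟨hl⟩
    have hred : PadicInt.toZMod x ^ 2 + d * PadicInt.toZMod y ^ 2 = 0 := by
      simpa using congrArg PadicInt.toZMod hxy
    exact isSquare_neg_of_sq_add_mul_sq_eq_zero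
      (PadicInt.toZMod_ne_zero_of_sq_add_mul_sq_eq hxy) hred
  have square_mod_q (q : ℕ) (hq : q.Prime) (_ : q ≠ 2) (hqd : q ∣ d) :
      IsSquare (l : ZMod q) := by
    have : Fact q.Prime := ⟨hq⟩
    obtain ⟨a, b, hab⟩ := exists_sq_add_mul_sq_eq_map PadicInt.toZMod (hloc q ⟨hq⟩)
    rw [(ZMod.natCast_eq_zero_iff d q).mpr hqd, zero_mul, add_zero] at hab
    exact ⟨a, by rw [← hab, sq]⟩
  obtain ⟨a, b, hab⟩ :=
    exists_sq_add_mul_sq_eq_map (PadicInt.toZModPow 3) (hloc 2 ⟨Nat.prime_two⟩)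
  rw [Nat.odd_iff]
  exact ⟨square_mod_l, square_mod_q,
    mod_eight_conditions_of_sq_add_mul_sq_eq (Nat.odd_iff.mp (hl.odd_of_ne_two hlodd)) hab⟩

/-- Let `d` be a positive integer and `l` an odd prime with `l ∤ d`. If
`x² + d·y² = l` is solvable in `ℤ_p` for all primes `p`, then `−d` is a
quadratic residue mod `l` (i.e. `l` splits completely in `ℚ(√−d)`); for each
odd prime `q ∣ d`, `l` is a quadratic residue mod `q`; and the congruence
conditions on `l` modulo `4` resp. `8` hold according to `d`. -/
theorem local_solvability_conditions_x_sq_add_d_y_sq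
    (d l : ℕ) (hd : 0 < d) (hl : l.Prime) (hlodd : l ≠ 2) (hld : ¬ l ∣ d)
    (hloc : ∀ (p : ℕ) (_ : Fact p.Prime), ∃ x y : ℤ_[p], x ^ 2 + d * y ^ 2 = l) :
    IsSquare (-(d : ZMod l)) ∧
    (∀ q : ℕ, q.Prime → q ≠ 2 → q ∣ d → IsSquare ((l : ZMod q))) ∧
    (Odd d → l % 4 = 1 ∨ l % 4 = d % 4) ∧
    (d % 4 = 2 → l % 8 = 1 ∨ l % 8 = (d + 1) % 8) ∧
    (d % 8 = 4 → l % 4 = 1) ∧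
    (8 ∣ d → l % 8 = 1) :=
  local_solvability_conditions_x_sq_add_d_y_sq_general d l hl hlodd hloc
end

section
/- Let n be a positive integer. The equation x² + 64y² + 64y + 16 = n has a solution in ℤ_p for all primes p and in ℝ if and only if: every prime p ≡ 3 (mod 4) divides n to an even power, and writing n = 2^s·m with m odd, either (s = 0 and n ≡ 1 (mod 8)), or (s = 2 and n/4 ≡ 5 (mod 8)), or s ∈ {4, 5}. -/
/-!
With `w = 2y + 1` the equation reads `x² + 16 w² = n`, `w` odd. For odd `p`, `2` is a unit of
`ℤ_p`, so solvability in `ℤ_p` means that `n` is a sum of two squares there. If `p ≡ 3 (mod 4)`,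
`-1` is not a square mod `p`, so `p ∣ x² + z²` forces `p ∣ x, z`, and descent makes `v_p(n)`
even; conversely these parities make `n` a sum of two integer squares. At `p = 2`,
`16 w² ≡ 16 (mod 128)` pins `n` to one of the classes `1 mod 8`, `20 mod 32`, `16 mod 64`,
`32 mod 128`, and each of them is attained because, by Hensel, every `2`-adic integer
`≡ 1 (mod 8)` is an odd square. As the odd part of `n` is a sum of two squares, hence
`≡ 1 (mod 4)`, these classes are exactly the cases on `s`.
-/

theorem sq_add_64_mul_sq_add_64_mul_add_16 {R : Type*} [CommRing R] (x y : R) :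
    x ^ 2 + 64 * y ^ 2 + 64 * y + 16 = x ^ 2 + 16 * (2 * y + 1) ^ 2 := by
  ring

theorem exists_sq_add_16_mul_odd_sq_iff_exists_sq_add_sq {R : Type*} [CommRing R]
    (h2 : IsUnit (2 : R)) (a : R) :
    (∃ x y : R, x ^ 2 + 16 * (2 * y + 1) ^ 2 = a) ↔ ∃ x z : R, x ^ 2 + z ^ 2 = a := by
  constructor
  · rintro ⟨x, y, rfl⟩
    exact ⟨x, 4 * (2 * y + 1), by ring⟩
  · rintro ⟨x, z, rfl⟩
    obtain ⟨u, hu⟩ := h2.exists_right_inv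
    -- `u = 1 / 2`, so `2 * y + 1 = z / 4`
    refine ⟨x, (z * u ^ 2 - 1) * u, ?_⟩
    have hodd : 2 * ((z * u ^ 2 - 1) * u) + 1 = z * u ^ 2 := by
      linear_combination (z * u ^ 2 - 1) * hu
    rw [hodd]
    linear_combination z ^ 2 * (8 * u ^ 3 + 4 * u ^ 2 + 2 * u + 1) * hu

theorem Real.exists_sq_add_16_mul_odd_sq {a : ℝ} (ha : 0 ≤ a) :
    ∃ x y : ℝ, x ^ 2 + 16 * (2 * y + 1) ^ 2 = a :=
  ⟨√a, -1 / 2, by rw [Real.sq_sqrt ha]; ring⟩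

namespace PadicInt

variable {p : ℕ} [Fact p.Prime]

theorem isUnit_two (hp : p ≠ 2) : IsUnit (2 : ℤ_[p]) := by
  rw [isUnit_iff, ← Nat.cast_ofNat, norm_natCast_eq_one_iff,
    Nat.coprime_primes Fact.out Nat.prime_two]
  exact hp

theorem natCast_dvd_iff_toZMod_eq_zero {a : ℤ_[p]} : (p : ℤ_[p]) ∣ a ↔ toZMod a = 0 := by
  rw [← Ideal.mem_span_singleton, ← maximalIdeal_eq_span_p, ← ker_toZMod, RingHom.mem_ker]

theorem natCast_dvd_natCast_iff {m : ℕ} : (p : ℤ_[p]) ∣ m ↔ p ∣ m := by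
  rw [← norm_lt_one_iff_dvd, norm_natCast_lt_one_iff]

theorem dvd_and_dvd_of_dvd_sq_add_sq (hp : p % 4 = 3) {x y : ℤ_[p]}
    (h : (p : ℤ_[p]) ∣ x ^ 2 + y ^ 2) : (p : ℤ_[p]) ∣ x ∧ (p : ℤ_[p]) ∣ y := by
  simp only [natCast_dvd_iff_toZMod_eq_zero, map_add, map_pow] at h ⊢
  have hy : toZMod y = 0 := by
    by_contra hy
    exact ZMod.mod_four_ne_three_of_sq_eq_neg_sq' hy (eq_neg_of_add_eq_zero_left h) hp
  rw [hy, zero_pow two_ne_zero, add_zero, sq_eq_zero_iff] at h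
  exact ⟨h, hy⟩

theorem even_of_sq_add_sq_eq_pow_mul (hp : p % 4 = 3) {m : ℤ_[p]} (hm : ¬ (p : ℤ_[p]) ∣ m)
    (k : ℕ) {x y : ℤ_[p]} (h : x ^ 2 + y ^ 2 = (p : ℤ_[p]) ^ k * m) : Even k := by
  have hp0 : (p : ℤ_[p]) ≠ 0 := Nat.cast_ne_zero.2 (Fact.out : p.Prime).ne_zero
  induction k using Nat.twoStepInduction generalizing x y with
  | zero => exact .zero
  | one =>
    obtain ⟨⟨x, rfl⟩, ⟨y, rfl⟩⟩ :=
      dvd_and_dvd_of_dvd_sq_add_sq hp ⟨m, by rw [h, pow_one]⟩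
    refine absurd ⟨x ^ 2 + y ^ 2, mul_left_cancel₀ hp0 ?_⟩ hm
    linear_combination -h
  | more k ih _ =>
    obtain ⟨⟨x, rfl⟩, ⟨y, rfl⟩⟩ :=
      dvd_and_dvd_of_dvd_sq_add_sq hp ⟨p ^ (k + 1) * m, by rw [h]; ring⟩
    refine (ih (x := x) (y := y) (mul_left_cancel₀ (pow_ne_zero 2 hp0) ?_)).add even_two
    linear_combination h

theorem even_padicValNat_of_natCast_eq_sq_add_sq (hp : p % 4 = 3) {n : ℕ} {x y : ℤ_[p]}
    (h : x ^ 2 + y ^ 2 = n) : Even (padicValNat p n) := by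
  rcases eq_or_ne n 0 with rfl | hn
  · simp
  rw [← Nat.factorization_def n Fact.out]
  refine even_of_sq_add_sq_eq_pow_mul hp (m := (ordCompl[p] n : ℕ)) ?_ _ (h.trans ?_)
  · exact natCast_dvd_natCast_iff.not.2 (Nat.not_dvd_ordCompl Fact.out hn)
  · exact_mod_cast (Nat.ordProj_mul_ordCompl_eq_self n p).symm

open Polynomial in
theorem exists_norm_sub_lt_and_sq_eq {b c : ℤ_[p]} (h : ‖b ^ 2 - c‖ < ‖2 * b‖ ^ 2) :
    ∃ x : ℤ_[p], x ^ 2 = c ∧ ‖x - b‖ < ‖2 * b‖ := by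
  have hderiv : derivative (X ^ 2 - C c) = 2 * X := by simp [one_add_one_eq_two, C_ofNat]
  obtain ⟨x, hx, hxb, -⟩ :=
    hensels_lemma (F := X ^ 2 - C c) (a := b) (by simpa [hderiv] using h)
  simp only [hderiv, map_sub, map_pow, map_mul, aeval_X, aeval_C] at hx hxb
  exact ⟨x, sub_eq_zero.1 hx, by simpa using hxb⟩

theorem exists_odd_sq_eq_eight_mul_add_one (q : ℤ_[2]) :
    ∃ y : ℤ_[2], (2 * y + 1) ^ 2 = 8 * q + 1 := by
  have hnorm2 : ‖(2 : ℤ_[2])‖ = 2⁻¹ := by simpa using norm_p (p := 2)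
  have hnorm : ‖(1 : ℤ_[2]) ^ 2 - (8 * q + 1)‖ < ‖2 * (1 : ℤ_[2])‖ ^ 2 := by
    rw [mul_one, hnorm2, show (1 : ℤ_[2]) ^ 2 - (8 * q + 1) = -(2 ^ 3 * q) by ring, norm_neg,
      norm_mul, norm_pow, hnorm2]
    calc (2 : ℝ)⁻¹ ^ 3 * ‖q‖
        ≤ 2⁻¹ ^ 3 := mul_le_of_le_one_right (by positivity) (norm_le_one q)
      _ < 2⁻¹ ^ 2 := by norm_num
  obtain ⟨x, hx, hx1⟩ := exists_norm_sub_lt_and_sq_eq hnorm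
  obtain ⟨y, hy⟩ : ((2 : ℕ) : ℤ_[2]) ∣ x - 1 :=
    (norm_lt_one_iff_dvd _).1 (by rw [mul_one, hnorm2] at hx1; linarith)
  refine ⟨y, ?_⟩
  rw [← hx]
  push_cast at hy
  linear_combination (-(x + 2 * y + 1)) * hy

theorem mod_of_natCast_eq_sq_add_16_mul_odd_sq {n : ℕ} {x y : ℤ_[2]}
    (h : x ^ 2 + 16 * (2 * y + 1) ^ 2 = n) :
    n % 8 = 1 ∨ n % 32 = 20 ∨ n % 64 = 16 ∨ n % 128 = 32 := by
  have hred := congrArg (toZModPow 7) h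
  simp only [map_add, map_mul, map_pow, map_ofNat, map_one, map_natCast] at hred
  have hodd : ∀ w : ZMod (2 ^ 7), 16 * (2 * w + 1) ^ 2 = 16 := by decide +kernel
  have hsq : ∀ a : ZMod (2 ^ 7), (a ^ 2 + 16).val % 8 = 1 ∨ (a ^ 2 + 16).val % 32 = 20 ∨
      (a ^ 2 + 16).val % 64 = 16 ∨ (a ^ 2 + 16).val = 32 := by decide +kernel
  have := hsq (toZModPow 7 x)
  rw [← hodd (toZModPow 7 y), hred, ZMod.val_natCast] at this
  omega

theorem exists_sq_add_16_mul_odd_sq_eq_natCast_of_mod {n : ℕ}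
    (h : n % 8 = 1 ∨ n % 32 = 20 ∨ n % 64 = 16 ∨ n % 128 = 32) :
    ∃ x y : ℤ_[2], x ^ 2 + 16 * (2 * y + 1) ^ 2 = n := by
  obtain ⟨q, rfl | rfl | rfl | rfl | rfl⟩ : ∃ q : ℕ, n = 8 * q + 1 ∨ n = 32 * q + 20 ∨
      n = 128 * q + 16 ∨ n = 128 * q + 80 ∨ n = 128 * q + 32 := by
    rcases h with h | h | h | h
    · exact ⟨n / 8, by omega⟩
    · exact ⟨n / 32, by omega⟩
    · exact ⟨n / 128, by omega⟩
    · exact ⟨n / 128, by omega⟩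
  · obtain ⟨x, hx⟩ := exists_odd_sq_eq_eight_mul_add_one ((q : ℤ_[2]) - 2)
    exact ⟨2 * x + 1, 0, by push_cast; linear_combination hx⟩
  · obtain ⟨x, hx⟩ := exists_odd_sq_eq_eight_mul_add_one (q : ℤ_[2])
    exact ⟨2 * (2 * x + 1), 0, by push_cast; linear_combination 4 * hx⟩
  · obtain ⟨y, hy⟩ := exists_odd_sq_eq_eight_mul_add_one (q : ℤ_[2])
    exact ⟨0, y, by push_cast; linear_combination 16 * hy⟩
  · obtain ⟨y, hy⟩ := exists_odd_sq_eq_eight_mul_add_one (q : ℤ_[2])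
    exact ⟨8, y, by push_cast; linear_combination 16 * hy⟩
  · obtain ⟨y, hy⟩ := exists_odd_sq_eq_eight_mul_add_one (q : ℤ_[2])
    exact ⟨4, y, by push_cast; linear_combination 16 * hy⟩

end PadicInt

theorem Nat.mod_four_eq_one_of_odd_of_eq_sq_add_sq {m x y : ℕ} (hm : Odd m)
    (h : m = x ^ 2 + y ^ 2) : m % 4 = 1 := by
  have hm2 := Nat.odd_iff.1 hm
  have hmod : m % 4 = ((x % 4) ^ 2 + (y % 4) ^ 2) % 4 := by
    simp [h, Nat.add_mod, Nat.pow_mod]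
  have hx := Nat.mod_lt x four_pos
  have hy := Nat.mod_lt y four_pos
  interval_cases x % 4 <;> interval_cases y % 4 <;> omega

theorem padicValNat_two_pow_mul {p : ℕ} [Fact p.Prime] (hp : p ≠ 2) (s : ℕ) {m : ℕ}
    (hm : m ≠ 0) : padicValNat p (2 ^ s * m) = padicValNat p m := by
  rw [padicValNat.mul (by positivity) hm, padicValNat.pow, padicValNat_primes hp]
  simp

theorem Nat.exists_two_pow_mul_odd_cases_iff {n : ℕ}
    (hn : ∀ p : ℕ, p.Prime → p % 4 = 3 → Even (padicValNat p n)) :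
    (∃ s m : ℕ, n = 2 ^ s * m ∧ Odd m ∧
        ((s = 0 ∧ n % 8 = 1) ∨ (s = 2 ∧ (n / 4) % 8 = 5) ∨ s = 4 ∨ s = 5)) ↔
      n % 8 = 1 ∨ n % 32 = 20 ∨ n % 64 = 16 ∨ n % 128 = 32 := by
  constructor
  · rintro ⟨s, m, rfl, hm, hs⟩
    obtain ⟨x, y, hxy⟩ : ∃ x y, m = x ^ 2 + y ^ 2 := by
      refine Nat.eq_sq_add_sq_iff.2 fun p hp hp3 => ?_
      have : Fact p.Prime := ⟨Nat.prime_of_mem_primeFactors hp⟩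
      rw [← padicValNat_two_pow_mul (by omega) s hm.pos.ne']
      exact hn p Fact.out hp3
    have hm4 := Nat.mod_four_eq_one_of_odd_of_eq_sq_add_sq hm hxy
    rcases hs with ⟨rfl, h⟩ | ⟨rfl, h⟩ | rfl | rfl <;> omega
  · rintro (h | h | h | h)
    · exact ⟨0, n, by simp, Nat.odd_iff.2 (by omega), .inl ⟨rfl, h⟩⟩
    · exact ⟨2, n / 4, by omega, Nat.odd_iff.2 (by omega), .inr (.inl ⟨rfl, by omega⟩)⟩
    · exact ⟨4, n / 16, by omega, Nat.odd_iff.2 (by omega), .inr (.inr (.inl rfl))⟩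
    · exact ⟨5, n / 32, by omega, Nat.odd_iff.2 (by omega), .inr (.inr (.inr rfl))⟩

theorem local_solvability_iff_x_sq_add_64y_sq_add_64y_add_16_general
    (n : ℕ) :
    ((∀ (p : ℕ) (_ : Fact p.Prime),
        ∃ x y : ℤ_[p], x ^ 2 + 64 * y ^ 2 + 64 * y + 16 = n) ∧
      (∃ x y : ℝ, x ^ 2 + 64 * y ^ 2 + 64 * y + 16 = n)) ↔
    ((∀ p : ℕ, p.Prime → p % 4 = 3 → Even (padicValNat p n)) ∧
      ∃ s m : ℕ, n = 2 ^ s * m ∧ Odd m ∧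
        ((s = 0 ∧ n % 8 = 1) ∨ (s = 2 ∧ (n / 4) % 8 = 5) ∨ s = 4 ∨ s = 5)) := by
  simp only [sq_add_64_mul_sq_add_64_mul_add_16,
    Real.exists_sq_add_16_mul_odd_sq n.cast_nonneg, and_true]
  constructor
  · intro h
    have hn : ∀ p : ℕ, p.Prime → p % 4 = 3 → Even (padicValNat p n) := by
      intro p hp hp3
      have : Fact p.Prime := ⟨hp⟩
      obtain ⟨x, z, hxz⟩ := (exists_sq_add_16_mul_odd_sq_iff_exists_sq_add_sq
        (PadicInt.isUnit_two (by omega)) _).1 (h p this)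
      exact PadicInt.even_padicValNat_of_natCast_eq_sq_add_sq hp3 hxz
    obtain ⟨x, y, hxy⟩ := h 2 inferInstance
    exact ⟨hn, (Nat.exists_two_pow_mul_odd_cases_iff hn).2
      (PadicInt.mod_of_natCast_eq_sq_add_16_mul_odd_sq hxy)⟩
  · rintro ⟨hn, h2⟩ p hp
    rcases eq_or_ne p 2 with rfl | hp2
    · exact PadicInt.exists_sq_add_16_mul_odd_sq_eq_natCast_of_mod
        ((Nat.exists_two_pow_mul_odd_cases_iff hn).1 h2)
    · obtain ⟨a, b, hab⟩ :=
        Nat.eq_sq_add_sq_iff.2 fun q hq ↦ hn q (Nat.prime_of_mem_primeFactors hq)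
      exact (exists_sq_add_16_mul_odd_sq_iff_exists_sq_add_sq (PadicInt.isUnit_two hp2) _).2
        ⟨a, b, by rw [hab]; push_cast; ring⟩

/-- Let `n` be a positive integer. The equation `x² + 64y² + 64y + 16 = n` is
solvable in `ℤ_p` for all primes `p` and in `ℝ` if and only if every prime
`p ≡ 3 (mod 4)` divides `n` to an even power, and writing `n = 2^s·m` with `m`
odd, either `s = 0` and `n ≡ 1 (mod 8)`, or `s = 2` and `n/4 ≡ 5 (mod 8)`, or
`s ∈ {4, 5}`. -/
theorem local_solvability_iff_x_sq_add_64y_sq_add_64y_add_16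
    (n : ℕ) (hn : 0 < n) :
    ((∀ (p : ℕ) (_ : Fact p.Prime),
        ∃ x y : ℤ_[p], x ^ 2 + 64 * y ^ 2 + 64 * y + 16 = n) ∧
      (∃ x y : ℝ, x ^ 2 + 64 * y ^ 2 + 64 * y + 16 = n)) ↔
    ((∀ p : ℕ, p.Prime → p % 4 = 3 → Even (padicValNat p n)) ∧
      ∃ s m : ℕ, n = 2 ^ s * m ∧ Odd m ∧
        ((s = 0 ∧ n % 8 = 1) ∨ (s = 2 ∧ (n / 4) % 8 = 5) ∨ s = 4 ∨ s = 5)) :=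
  local_solvability_iff_x_sq_add_64y_sq_add_64y_add_16_general n
end
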